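/- arXiv:2008.01717 — 3 statements merged into one kernel-verified Lean document; each statement's English description precedes it below -/
import Mathlib

section
/- If the permutation w ∈ S_n has an obstruction of Type 1, then w contains at least one of the patterns 21543, 215634, 214635, 215364, 13254. -/
open scoped Classical

universe u

namespace CDGPaper
/-- The Rothe diagram of a permutation `w` of `Fin n` (0-indexed):
`(i,j)` with `w i > j` and `w⁻¹ j > i`. -/
def RotheDiagram {n : ℕ} (w : Equiv.Perm (Fin n)) : Set (Fin n × Fin n) :=
  {p | p.2 < w p.1 ∧ p.1 < w⁻¹ p.2}

/-- The rank function `rank_w(i,j) = #{k ≤ i : w(k) ≤ j}`. -/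
noncomputable def rank {n : ℕ} (w : Equiv.Perm (Fin n)) (i j : Fin n) : ℕ :=
  (Finset.univ.filter fun k => k ≤ i ∧ w k ≤ j).card

/-- The essential set: boxes of the Rothe diagram with no diagram box immediately
south or immediately east. -/
def EssentialSet {n : ℕ} (w : Equiv.Perm (Fin n)) : Set (Fin n × Fin n) :=
  {p | p ∈ RotheDiagram w ∧
    (∀ i' : Fin n, (i' : ℕ) = (p.1 : ℕ) + 1 → (i', p.2) ∉ RotheDiagram w) ∧
    (∀ j' : Fin n, (j' : ℕ) = (p.2 : ℕ) + 1 → (p.1, j') ∉ RotheDiagram w)}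

/-- The dominant part of the Rothe diagram: boxes of rank `0`. -/
def DominantPart {n : ℕ} (w : Equiv.Perm (Fin n)) : Set (Fin n × Fin n) :=
  {p ∈ RotheDiagram w | rank w p.1 p.2 = 0}

/-- A lower outside corner: an essential box with no essential box strictly southeast of it. -/
def IsLowerOutsideCorner {n : ℕ} (w : Equiv.Perm (Fin n)) (p : Fin n × Fin n) : Prop :=
  p ∈ EssentialSet w ∧ ∀ q ∈ EssentialSet w, ¬(p.1 < q.1 ∧ p.2 < q.2)

/-- The Coxeter length of `w`: its number of inversions. -/
noncomputable def coxeterLength {n : ℕ} (w : Equiv.Perm (Fin n)) : ℕ :=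
  (Finset.univ.filter fun p : Fin n × Fin n => p.1 < p.2 ∧ w p.2 < w p.1).card

/-- `w` contains the pattern `v` if some increasing sequence of positions of `w`
has values in the same relative order as `v`. -/
def ContainsPattern {n k : ℕ} (w : Equiv.Perm (Fin n)) (v : Equiv.Perm (Fin k)) : Prop :=
  ∃ f : Fin k → Fin n, StrictMono f ∧ ∀ a b : Fin k, v a < v b ↔ w (f a) < w (f b)

/-- The polynomial ring `ℂ[x_{i,j}]`. -/
abbrev PolyRing (n : ℕ) := MvPolynomial (Fin n × Fin n) ℂ

/-- The generic `n × n` matrix of indeterminates. -/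
noncomputable def genMatrix (n : ℕ) : Matrix (Fin n) (Fin n) (PolyRing n) :=
  fun i j => MvPolynomial.X (i, j)

/-- The generic matrix with the variables in the dominant part of `D_w` set to `0`. -/
noncomputable def cdgMatrix {n : ℕ} (w : Equiv.Perm (Fin n)) :
    Matrix (Fin n) (Fin n) (PolyRing n) :=
  fun i j => if (i, j) ∈ DominantPart w then 0 else MvPolynomial.X (i, j)

/-- The set of `d`-minors of `M` using rows weakly above `i` and columns weakly
left of `j` (the northwest `i × j` submatrix, 0-indexed). -/
def minors {n : ℕ} (M : Matrix (Fin n) (Fin n) (PolyRing n)) (d : ℕ) (i j : Fin n) :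
    Set (PolyRing n) :=
  {f | ∃ (Rs Cs : Finset (Fin n)) (hR : Rs.card = d) (hC : Cs.card = d),
    (∀ a ∈ Rs, a ≤ i) ∧ (∀ b ∈ Cs, b ≤ j) ∧
    f = (M.submatrix (fun a => (Rs.orderIsoOfFin hR a : Fin n))
          (fun b => (Cs.orderIsoOfFin hC b : Fin n))).det}

/-- The Schubert determinantal ideal `I_w`. -/
noncomputable def SchubertIdeal {n : ℕ} (w : Equiv.Perm (Fin n)) : Ideal (PolyRing n) :=
  Ideal.span (⋃ p : Fin n × Fin n, minors (genMatrix n) (rank w p.1 p.2 + 1) p.1 p.2)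

/-- The set of CDG generators `G_w` of `I_w`. -/
noncomputable def CDGgens {n : ℕ} (w : Equiv.Perm (Fin n)) : Set (PolyRing n) :=
  (⋃ p ∈ EssentialSet w \ DominantPart w,
      minors (cdgMatrix w) (rank w p.1 p.2 + 1) p.1 p.2) ∪
    (fun p => MvPolynomial.X p) '' DominantPart w

/-- The leading exponent of a polynomial with respect to a monomial order. -/
noncomputable def leadExp {n : ℕ} (m : MonomialOrder.{0, u} (Fin n × Fin n)) (f : PolyRing n) :
    (Fin n × Fin n) →₀ ℕ :=
  m.toSyn.symm (f.support.sup fun d => m.toSyn d)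

/-- The leading term of a polynomial with respect to a monomial order. -/
noncomputable def leadTerm {n : ℕ} (m : MonomialOrder.{0, u} (Fin n × Fin n)) (f : PolyRing n) :
    PolyRing n :=
  MvPolynomial.monomial (leadExp m f) (f.coeff (leadExp m f))

/-- `G ⊆ I` is a Gröbner basis of `I` if the leading terms of `G` generate the ideal
of leading terms of all elements of `I`. -/
def IsGroebnerBasis {n : ℕ} (m : MonomialOrder.{0, u} (Fin n × Fin n)) (G : Set (PolyRing n))
    (I : Ideal (PolyRing n)) : Prop :=
  G ⊆ (I : Set (PolyRing n)) ∧
    Ideal.span (leadTerm m '' G) = Ideal.span (leadTerm m '' (I : Set (PolyRing n)))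

/-- A diagonal term order: the leading term of the determinant of any square submatrix of
the generic matrix is the product of its main-diagonal entries. -/
def IsDiagonalOrder {n : ℕ} (m : MonomialOrder.{0, u} (Fin n × Fin n)) : Prop :=
  ∀ (d : ℕ) (Rs Cs : Finset (Fin n)) (hR : Rs.card = d) (hC : Cs.card = d),
    leadTerm m
        ((genMatrix n).submatrix (fun a => (Rs.orderIsoOfFin hR a : Fin n))
          (fun b => (Cs.orderIsoOfFin hC b : Fin n))).det =
      ∏ a : Fin d,
        MvPolynomial.X ((Rs.orderIsoOfFin hR a : Fin n), (Cs.orderIsoOfFin hC a : Fin n))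

/-- `w` is CDG if the CDG generators are a Gröbner basis of `I_w` for every diagonal
term order. -/
noncomputable def IsCDG {n : ℕ} (w : Equiv.Perm (Fin n)) : Prop :=
  ∀ m : MonomialOrder.{0, u} (Fin n × Fin n), IsDiagonalOrder m →
    IsGroebnerBasis m (CDGgens w) (SchubertIdeal w)


/-- The eight patterns, as permutations (one-line notations 13254 etc., 0-indexed). -/
noncomputable def p13254 : Equiv.Perm (Fin 5) := Equiv.ofBijective ![0,2,1,4,3] (by decide)
noncomputable def p21543 : Equiv.Perm (Fin 5) := Equiv.ofBijective ![1,0,4,3,2] (by decide)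
noncomputable def p214635 : Equiv.Perm (Fin 6) := Equiv.ofBijective ![1,0,3,5,2,4] (by decide)
noncomputable def p215364 : Equiv.Perm (Fin 6) := Equiv.ofBijective ![1,0,4,2,5,3] (by decide)
noncomputable def p215634 : Equiv.Perm (Fin 6) := Equiv.ofBijective ![1,0,4,5,2,3] (by decide)
noncomputable def p241635 : Equiv.Perm (Fin 6) := Equiv.ofBijective ![1,3,0,5,2,4] (by decide)
noncomputable def p315264 : Equiv.Perm (Fin 6) := Equiv.ofBijective ![2,0,4,1,5,3] (by decide)
noncomputable def p4261735 : Equiv.Perm (Fin 7) :=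
  Equiv.ofBijective ![3,1,5,0,6,2,4] (by decide)

/-- `w` avoids all eight of the patterns of [HPW, Conjecture 7.1]. -/
noncomputable def AvoidsAllEight {n : ℕ} (w : Equiv.Perm (Fin n)) : Prop :=
  ¬ContainsPattern w p13254 ∧ ¬ContainsPattern w p21543 ∧ ¬ContainsPattern w p214635 ∧
    ¬ContainsPattern w p215364 ∧ ¬ContainsPattern w p215634 ∧ ¬ContainsPattern w p241635 ∧
    ¬ContainsPattern w p315264 ∧ ¬ContainsPattern w p4261735

/-- Obstruction of Type 1. -/
def HasType1Obstruction {n : ℕ} (w : Equiv.Perm (Fin n)) : Prop :=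
  ∃ rs ∈ DominantPart w ∩ EssentialSet w, ∃ p q : Fin n × Fin n,
    p ∈ RotheDiagram w ∧ q ∈ RotheDiagram w ∧ p ≠ q ∧
    rs.1 < p.1 ∧ rs.2 < p.2 ∧ rs.1 < q.1 ∧ rs.2 < q.2 ∧ p.1 ≠ q.1 ∧ p.2 ≠ q.2

/-- Obstruction of Type 2. -/
noncomputable def HasType2Obstruction {n : ℕ} (w : Equiv.Perm (Fin n)) : Prop :=
  ∃ rs ∈ DominantPart w ∩ EssentialSet w,
    (∃ i j j' : Fin n, (i, j) ∈ EssentialSet w ∧ (i, j') ∈ EssentialSet w ∧ j ≠ j' ∧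
        rs.1 < i ∧ rs.2 < j ∧ rs.2 < j' ∧
        (Finset.univ.filter fun k => (k, j) ∈ DominantPart w).max =
          (Finset.univ.filter fun k => (k, j') ∈ DominantPart w).max) ∨
      (∃ i i' j : Fin n, (i, j) ∈ EssentialSet w ∧ (i', j) ∈ EssentialSet w ∧ i ≠ i' ∧
        rs.1 < i ∧ rs.1 < i' ∧ rs.2 < j ∧
        (Finset.univ.filter fun l => (i, l) ∈ DominantPart w).max =
          (Finset.univ.filter fun l => (i', l) ∈ DominantPart w).max)

/-- Obstruction of Type 3. -/
def HasType3Obstruction {n : ℕ} (w : Equiv.Perm (Fin n)) : Prop :=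
  ∃ p q : Fin n × Fin n, p ∈ EssentialSet w \ DominantPart w ∧
    q ∈ EssentialSet w \ DominantPart w ∧ p.1 < q.1 ∧ p.2 < q.2

/-- `f` involves the variable `v` (some term of `f` is divisible by `x_v`). -/
def involvesVar {n : ℕ} (v : Fin n × Fin n) (f : PolyRing n) : Prop :=
  ∃ d ∈ f.support, d v ≠ 0

/-- For `f = y·q + r`, with `y = x_v` dividing no term of `q` or `r`, the polynomial `q`:
strip `y` from the terms of `f` divisible by `y`. -/
noncomputable def qPart {n : ℕ} (v : Fin n × Fin n) (f : PolyRing n) : PolyRing n :=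
  ∑ d ∈ f.support.filter fun d => d v ≠ 0,
    MvPolynomial.monomial (d - Finsupp.single v (d v)) (f.coeff d)

/-- The ideal `N_{y,I_w}`, generated by the CDG generators not involving `y = x_v`. -/
noncomputable def NIdeal {n : ℕ} (w : Equiv.Perm (Fin n)) (v : Fin n × Fin n) :
    Ideal (PolyRing n) :=
  Ideal.span {g ∈ CDGgens w | ¬involvesVar v g}

/-- The generators `{q_1, …, q_k, h_1, …, h_ℓ}` of `C_{y,I_w}`. -/
noncomputable def Cgens {n : ℕ} (w : Equiv.Perm (Fin n)) (v : Fin n × Fin n) :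
    Set (PolyRing n) :=
  qPart v '' {g ∈ CDGgens w | involvesVar v g} ∪ {g ∈ CDGgens w | ¬involvesVar v g}

/-- `m_1`. -/
noncomputable def mOne {n : ℕ} (w : Equiv.Perm (Fin n)) (i j : Fin n) : ℕ :=
  if ∃ p : Fin n, (p : ℕ) = 0 ∧ (p, j) ∈ DominantPart w then
    sInf {d : ℕ | ∃ p : Fin n, (p, j) ∈ DominantPart w ∧ d = (i : ℕ) - (p : ℕ)}
  else (i : ℕ) + 1

/-- `m_2`. -/
noncomputable def mTwo {n : ℕ} (w : Equiv.Perm (Fin n)) (i j : Fin n) : ℕ :=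
  if ∃ q : Fin n, (q : ℕ) = 0 ∧ (i, q) ∈ DominantPart w then
    sInf {d : ℕ | ∃ q : Fin n, (i, q) ∈ DominantPart w ∧ d = (j : ℕ) - (q : ℕ)}
  else (j : ℕ) + 1

/-- `h` is a CDG generator determined by an essential box in row `i` or column `j`:
all its variables lie weakly northwest of an essential box `(i',j)` or `(i,j')` whose rank
condition matches its degree. -/
def IsRowColGen {n : ℕ} (w : Equiv.Perm (Fin n)) (i j : Fin n) (h : PolyRing n) : Prop :=
  (∃ i' : Fin n, (i', j) ∈ EssentialSet w ∧ rank w i' j + 1 = h.totalDegree ∧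
      ∀ p ∈ h.vars, p.1 ≤ i' ∧ p.2 ≤ j) ∨
    (∃ j' : Fin n, (i, j') ∈ EssentialSet w ∧ rank w i j' + 1 = h.totalDegree ∧
      ∀ p ∈ h.vars, p.1 ≤ i ∧ p.2 ≤ j')

/-- The CDG generators of the ideal `Q_{y,I_w}` for `y = x_{i,j}`. -/
noncomputable def Qgens {n : ℕ} (w : Equiv.Perm (Fin n)) (i j : Fin n) : Set (PolyRing n) :=
  qPart (i, j) '' {g ∈ CDGgens w | involvesVar (i, j) g} ∪
    (if rank w i j + 1 = min (mOne w i j) (mTwo w i j) then ∅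
      else {h ∈ CDGgens w | ¬involvesVar (i, j) h ∧ IsRowColGen w i j h})

/-!
The essential box `(r, s)` forces `w (r + 1) ≤ s` and `w⁻¹ (s + 1) ≤ r`, so the positions
`B = w⁻¹ (s + 1) < A = r + 1` form a descent `21` that precedes, in both position and
value, everything southeast of `(r, s)`. A diagram box `(i, j)` strictly southeast of `(r, s)` is an inversion
`i < w⁻¹ j` whose two entries lie after `A` and have values above `w B`. Two such inversions in
distinct rows and columns either contain a `321`, which together with `B, A` gives `21543`,
or form one of the `321`-avoiding arrangements `2143`, `3142`, `2413`, `3412`, which give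
`13254`, `215364`, `214635`, `215634`.
-/

open Equiv

theorem ContainsPattern.of_strictMono {n k : ℕ} {w : Perm (Fin n)} {v : Perm (Fin k)}
    {f : Fin k → Fin n} (hf : StrictMono f) (hwf : StrictMono (w ∘ f ∘ v.symm)) :
    ContainsPattern w v :=
  ⟨f, hf, fun a b => by simpa using (hwf.lt_iff_lt (a := v a) (b := v b)).symm⟩

section Patterns

variable {n : ℕ} {w : Perm (Fin n)}

theorem containsPattern_p21543 {B A x₁ x₂ x₃ : Fin n}
    (h₁ : B < A) (h₂ : A < x₁) (h₃ : x₁ < x₂) (h₄ : x₂ < x₃)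
    (v₁ : w A < w B) (v₂ : w B < w x₃) (v₃ : w x₃ < w x₂) (v₄ : w x₂ < w x₁) :
    ContainsPattern w p21543 := by
  have hinv : ⇑p21543.symm = ![1, 0, 4, 3, 2] := by
    funext c; rw [Equiv.symm_apply_eq]; fin_cases c <;> rfl
  refine .of_strictMono (f := ![B, A, x₁, x₂, x₃]) ?_ ?_ <;>
    rw [Fin.strictMono_iff_lt_succ] <;> intro i <;> fin_cases i <;> simpa [hinv]

theorem containsPattern_p13254 {A x₁ x₂ x₃ x₄ : Fin n}
    (h₁ : A < x₁) (h₂ : x₁ < x₂) (h₃ : x₂ < x₃) (h₄ : x₃ < x₄)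
    (v₁ : w A < w x₂) (v₂ : w x₂ < w x₁) (v₃ : w x₁ < w x₄) (v₄ : w x₄ < w x₃) :
    ContainsPattern w p13254 := by
  have hinv : ⇑p13254.symm = ![0, 2, 1, 4, 3] := by
    funext c; rw [Equiv.symm_apply_eq]; fin_cases c <;> rfl
  refine .of_strictMono (f := ![A, x₁, x₂, x₃, x₄]) ?_ ?_ <;>
    rw [Fin.strictMono_iff_lt_succ] <;> intro i <;> fin_cases i <;> simpa [hinv]

theorem containsPattern_p215634 {B A x₁ x₂ x₃ x₄ : Fin n}
    (h₁ : B < A) (h₂ : A < x₁) (h₃ : x₁ < x₂) (h₄ : x₂ < x₃) (h₅ : x₃ < x₄)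
    (v₁ : w A < w B) (v₂ : w B < w x₃) (v₃ : w x₃ < w x₄) (v₄ : w x₄ < w x₁)
    (v₅ : w x₁ < w x₂) :
    ContainsPattern w p215634 := by
  have hinv : ⇑p215634.symm = ![1, 0, 4, 5, 2, 3] := by
    funext c; rw [Equiv.symm_apply_eq]; fin_cases c <;> rfl
  refine .of_strictMono (f := ![B, A, x₁, x₂, x₃, x₄]) ?_ ?_ <;>
    rw [Fin.strictMono_iff_lt_succ] <;> intro i <;> fin_cases i <;> simpa [hinv]

theorem containsPattern_p214635 {B A x₁ x₂ x₃ x₄ : Fin n}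
    (h₁ : B < A) (h₂ : A < x₁) (h₃ : x₁ < x₂) (h₄ : x₂ < x₃) (h₅ : x₃ < x₄)
    (v₁ : w A < w B) (v₂ : w B < w x₃) (v₃ : w x₃ < w x₁) (v₄ : w x₁ < w x₄)
    (v₅ : w x₄ < w x₂) :
    ContainsPattern w p214635 := by
  have hinv : ⇑p214635.symm = ![1, 0, 4, 2, 5, 3] := by
    funext c; rw [Equiv.symm_apply_eq]; fin_cases c <;> rfl
  refine .of_strictMono (f := ![B, A, x₁, x₂, x₃, x₄]) ?_ ?_ <;>
    rw [Fin.strictMono_iff_lt_succ] <;> intro i <;> fin_cases i <;> simpa [hinv]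

theorem containsPattern_p215364 {B A x₁ x₂ x₃ x₄ : Fin n}
    (h₁ : B < A) (h₂ : A < x₁) (h₃ : x₁ < x₂) (h₄ : x₂ < x₃) (h₅ : x₃ < x₄)
    (v₁ : w A < w B) (v₂ : w B < w x₂) (v₃ : w x₂ < w x₄) (v₄ : w x₄ < w x₁)
    (v₅ : w x₁ < w x₃) :
    ContainsPattern w p215364 := by
  have hinv : ⇑p215364.symm = ![1, 0, 3, 5, 2, 4] := by
    funext c; rw [Equiv.symm_apply_eq]; fin_cases c <;> rfl
  refine .of_strictMono (f := ![B, A, x₁, x₂, x₃, x₄]) ?_ ?_ <;>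
    rw [Fin.strictMono_iff_lt_succ] <;> intro i <;> fin_cases i <;> simpa [hinv]

end Patterns

section Essential

variable {n : ℕ} {w : Perm (Fin n)} {r s : Fin n}

theorem apply_le_of_mem_essentialSet (hrs : (r, s) ∈ EssentialSet w) {a : Fin n}
    (ha : (a : ℕ) = r + 1) : w a ≤ s := by
  obtain ⟨⟨-, hr : r < w⁻¹ s⟩, hsouth, -⟩ := hrs
  by_contra! hsa
  have hle : a ≤ w⁻¹ s := by rw [Fin.le_def]; rw [Fin.lt_def] at hr; omega
  have hne : a ≠ w⁻¹ s := by rintro rfl; simp at hsa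
  exact hsouth a ha ⟨hsa, lt_of_le_of_ne hle hne⟩

theorem inv_apply_le_of_mem_essentialSet (hrs : (r, s) ∈ EssentialSet w) {b : Fin n}
    (hb : (b : ℕ) = s + 1) : w⁻¹ b ≤ r := by
  obtain ⟨⟨hs : s < w r, -⟩, -, heast⟩ := hrs
  by_contra! hrb
  have hle : b ≤ w r := by rw [Fin.le_def]; rw [Fin.lt_def] at hs; omega
  have hne : b ≠ w r := by rintro rfl; simp at hrb
  exact heast b hb ⟨lt_of_le_of_ne hle hne, hrb⟩

theorem exists_descent_northwest_of_mem_essentialSet (hrs : (r, s) ∈ EssentialSet w) :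
    ∃ B A : Fin n, B < A ∧ w A < w B ∧
      ∀ p ∈ RotheDiagram w, r < p.1 → s < p.2 → A < p.1 ∧ w B < p.2 := by
  obtain ⟨hs, hr⟩ : s < w r ∧ r < w⁻¹ s := hrs.1
  rw [Fin.lt_def] at hs hr
  set A : Fin n := ⟨r + 1, by omega⟩
  set C : Fin n := ⟨s + 1, by omega⟩
  have hA : w A ≤ s := apply_le_of_mem_essentialSet hrs rfl
  have hB : w⁻¹ C ≤ r := inv_apply_le_of_mem_essentialSet hrs rfl
  have hwB : w (w⁻¹ C) = C := w.apply_symm_apply C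
  refine ⟨w⁻¹ C, A, hB.trans_lt (Fin.lt_def.2 (by simp [A])), ?_, fun p hp hpr hps => ⟨?_, ?_⟩⟩
  · rw [hwB]; exact hA.trans_lt (by simp [Fin.lt_def, C])
  · refine lt_of_le_of_ne (Fin.le_def.2 (by simpa [A] using hpr)) fun h => ?_
    exact hA.not_gt (h ▸ hps.trans hp.1)
  · rw [hwB]
    refine lt_of_le_of_ne (by simpa [C, Fin.le_def] using hps) fun h => ?_
    exact (hB.trans_lt hpr).not_gt (h ▸ hp.2)

end Essential

def ContainsType1Pattern {n : ℕ} (w : Perm (Fin n)) : Prop :=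
  ContainsPattern w p21543 ∨ ContainsPattern w p215634 ∨ ContainsPattern w p214635 ∨
    ContainsPattern w p215364 ∨ ContainsPattern w p13254

section Inversions

variable {n : ℕ} {w : Perm (Fin n)} {B A i k i' k' : Fin n}

theorem containsType1Pattern_of_inversions_of_lt (hBA : B < A) (hAB : w A < w B)
    (hAi : A < i) (hik : i < k) (hBk : w B < w k) (hki : w k < w i)
    (hAi' : A < i') (hik' : i' < k') (hBk' : w B < w k') (hki' : w k' < w i')
    (hii' : i < i') (hkk' : k ≠ k') : ContainsType1Pattern w := by
  rcases lt_or_gt_of_ne (w.injective.ne hii'.ne) with hwii' | hwii'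
  swap
  · exact .inl (containsPattern_p21543 hBA hAi hii' hik' hAB hBk' hki' hwii')
  rcases lt_or_gt_of_ne hkk' with hkk | hkk
  · rcases lt_or_gt_of_ne (w.injective.ne hkk') with hwkk | hwkk
    swap
    · exact .inl (containsPattern_p21543 hBA hAi hik hkk hAB hBk' hwkk hki)
    rcases lt_trichotomy k i' with hki'' | rfl | hki''
    · rcases lt_or_gt_of_ne (w.injective.ne (hii'.trans hik').ne) with hwik | hwik
      · exact .inr (.inr (.inr (.inr (containsPattern_p13254 hAi hik hki'' hik'
          (hAB.trans hBk) hki hwik hki'))))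
      · exact .inr (.inr (.inr (.inl (containsPattern_p215364 hBA hAi hik hki'' hik'
          hAB hBk hwkk hwik hwii'))))
    · exact absurd (hki.trans hwii') (lt_irrefl _)
    · rcases lt_or_gt_of_ne (w.injective.ne (hii'.trans hik').ne) with hwik | hwik
      · exact .inr (.inr (.inl (containsPattern_p214635 hBA hAi hii' hki'' hkk
          hAB hBk hki hwik hki')))
      · exact .inr (.inl (containsPattern_p215634 hBA hAi hii' hki'' hkk
          hAB hBk hwkk hwik hwii'))
  · rcases lt_or_gt_of_ne (w.injective.ne hkk') with hwkk | hwkk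
    · exact .inl (containsPattern_p21543 hBA hAi' hik' hkk hAB hBk hwkk hki')
    · exact .inr (.inl (containsPattern_p215634 hBA hAi hii' hik' hkk
        hAB hBk' hwkk hki hwii'))

theorem containsType1Pattern_of_inversions (hBA : B < A) (hAB : w A < w B)
    (hAi : A < i) (hik : i < k) (hBk : w B < w k) (hki : w k < w i)
    (hAi' : A < i') (hik' : i' < k') (hBk' : w B < w k') (hki' : w k' < w i')
    (hii' : i ≠ i') (hkk' : k ≠ k') : ContainsType1Pattern w := by
  rcases lt_or_gt_of_ne hii' with h | h
  · exact containsType1Pattern_of_inversions_of_lt hBA hAB hAi hik hBk hki hAi' hik' hBk' hki'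
      h hkk'
  · exact containsType1Pattern_of_inversions_of_lt hBA hAB hAi' hik' hBk' hki' hAi hik hBk hki
      h hkk'.symm

end Inversions

/-- a Type 1 obstruction forces containment of one of
21543, 215634, 214635, 215364, 13254. -/
theorem statement3 {n : ℕ} (w : Equiv.Perm (Fin n)) (h : HasType1Obstruction w) :
    ContainsPattern w p21543 ∨ ContainsPattern w p215634 ∨ ContainsPattern w p214635 ∨
      ContainsPattern w p215364 ∨ ContainsPattern w p13254 := by
  obtain ⟨⟨r, s⟩, ⟨-, hess⟩, ⟨i, j⟩, ⟨i', j'⟩, hp, hp', -, hir, hjs, hi'r, hj's, hii', hjj'⟩ := h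
  obtain ⟨B, A, hBA, hAB, hSE⟩ := exists_descent_northwest_of_mem_essentialSet hess
  obtain ⟨hAi, hBj⟩ := hSE _ hp hir hjs
  obtain ⟨hAi', hBj'⟩ := hSE _ hp' hi'r hj's
  obtain ⟨k, rfl⟩ := w.surjective j
  obtain ⟨k', rfl⟩ := w.surjective j'
  obtain ⟨hki, hik⟩ : w k < w i ∧ i < k := by simpa [RotheDiagram] using hp
  obtain ⟨hki', hik'⟩ : w k' < w i' ∧ i' < k' := by simpa [RotheDiagram] using hp'
  exact containsType1Pattern_of_inversions hBA hAB hAi hik hBj hki hAi' hik' hBj' hki' hii'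
    (w.injective.ne_iff.1 hjj')

end CDGPaper
end

section
/- If the permutation w ∈ S_n has an obstruction of Type 2, then w contains at least one of the patterns 21543, 214635, 241635, 215364, 315264. -/
open scoped Classical

universe u

namespace CDGPaper
/-!
Let `(r, s)` be the dominant essential box and `(i, j)`, `(i, j')` with `j < j'` the two
essential boxes in row `i`. Being essential, they supply the positions `r + 1` (with value `≤ s`),
`c = w⁻¹ (s + 1) ≤ r`, `b = w⁻¹ (j + 1) ≤ i`, `a = w⁻¹ j > i` and `a' = w⁻¹ j' > i`.
If `a' < a`, then `c, r + 1, i, a', a` form a `21543`. If `a < a'` and `b > r + 1`, then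
`c, r + 1, b, i, a, a'` form a `214635`. Otherwise `b ≤ r`, so `(b, j')` is not dominant; since the
dominant parts of columns `j` and `j'` have the same last row, neither is `(b, j)`, which yields
`t ≤ b` with `s < w t < j`, and `t, b, r + 1, i, a, a'` form a `241635`.
The column case is the row case for `w⁻¹`, which turns `214635` and `241635` into their
inverses `215364` and `315264`.
-/

section Diagram

variable {n : ℕ} {w : Equiv.Perm (Fin n)} {i j : Fin n}

lemma mem_rotheDiagram_inv : (i, j) ∈ RotheDiagram w⁻¹ ↔ (j, i) ∈ RotheDiagram w := by
  simp only [RotheDiagram, Set.mem_ofPred_eq, inv_inv]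
  exact and_comm

lemma mem_essentialSet_inv : (i, j) ∈ EssentialSet w⁻¹ ↔ (j, i) ∈ EssentialSet w := by
  simp only [EssentialSet, Set.mem_ofPred_eq, mem_rotheDiagram_inv]
  tauto

lemma mem_dominantPart_iff : (i, j) ∈ DominantPart w ↔ ∀ k ≤ i, j < w k := by
  have hrank : rank w i j = 0 ↔ ∀ k ≤ i, j < w k := by
    simp [rank, Finset.card_eq_zero, Finset.filter_eq_empty_iff]
  refine ⟨fun h => hrank.mp h.2, fun h => ⟨⟨h i le_rfl, ?_⟩, hrank.mpr h⟩⟩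
  by_contra! hle
  simpa using h _ hle

lemma mem_dominantPart_inv : (i, j) ∈ DominantPart w⁻¹ ↔ (j, i) ∈ DominantPart w := by
  simp only [mem_dominantPart_iff]
  constructor <;> intro h k hk <;> by_contra! hle
  · simpa using hk.trans_lt (h (w k) hle)
  · simpa using hk.trans_lt (h (w⁻¹ k) hle)

lemma mem_dominantPart_of_le {i' : Fin n} (h : (i, j) ∈ DominantPart w) (hi : i' ≤ i) :
    (i', j) ∈ DominantPart w :=
  mem_dominantPart_iff.mpr fun k hk => mem_dominantPart_iff.mp h k (hk.trans hi)

lemma mem_dominantPart_of_max_eq {j' k : Fin n}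
    (hmax : (Finset.univ.filter fun k => (k, j) ∈ DominantPart w).max =
      (Finset.univ.filter fun k => (k, j') ∈ DominantPart w).max)
    (hk : (k, j) ∈ DominantPart w) : (k, j') ∈ DominantPart w := by
  have hkF : k ∈ Finset.univ.filter fun k => (k, j) ∈ DominantPart w := by simpa using hk
  obtain ⟨b, hb⟩ := Finset.max_of_mem hkF
  have hbF := Finset.mem_of_max (hmax ▸ hb)
  exact mem_dominantPart_of_le (by simpa using hbF) (Finset.le_max_of_eq hkF hb)

lemma exists_next_row_of_mem_essentialSet (h : (i, j) ∈ EssentialSet w) :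
    ∃ i₁ : Fin n, (i₁ : ℕ) = i + 1 ∧ w i₁ ≤ j := by
  obtain ⟨⟨-, hi⟩, hbelow, -⟩ := h
  dsimp only at hi hbelow
  let i₁ : Fin n := ⟨i + 1, by omega⟩
  refine ⟨i₁, rfl, not_lt.mp fun hj => hbelow i₁ rfl ⟨hj, lt_of_le_of_ne hi fun heq => ?_⟩⟩
  rw [show i₁ = w⁻¹ j from heq] at hj
  simp at hj

lemma exists_next_col_of_mem_essentialSet (h : (i, j) ∈ EssentialSet w) :
    ∃ c : Fin n, (w c : ℕ) = j + 1 ∧ c ≤ i := by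
  obtain ⟨j₁, hj₁, hc⟩ := exists_next_row_of_mem_essentialSet (mem_essentialSet_inv.mpr h)
  exact ⟨w⁻¹ j₁, by simpa using hj₁, hc⟩

end Diagram

section Pattern

variable {n k : ℕ} {w : Equiv.Perm (Fin n)} {v : Equiv.Perm (Fin k)}

lemma containsPattern_iff : ContainsPattern w v ↔
    ∃ f g : Fin k → Fin n, StrictMono f ∧ StrictMono g ∧ ∀ a, w (f a) = g (v a) := by
  constructor
  · rintro ⟨f, hf, hord⟩
    refine ⟨f, fun b => w (f (v⁻¹ b)), hf, fun x y hxy => ?_, fun a => by simp⟩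
    exact (hord _ _).mp (by simpa using hxy)
  · rintro ⟨f, g, hf, hg, hfg⟩
    exact ⟨f, hf, fun a b => by rw [hfg, hfg, hg.lt_iff_lt]⟩

lemma ContainsPattern.inv (h : ContainsPattern w v) : ContainsPattern w⁻¹ v⁻¹ := by
  obtain ⟨f, g, hf, hg, hfg⟩ := containsPattern_iff.mp h
  refine containsPattern_iff.mpr ⟨g, f, hg, hf, fun a => ?_⟩
  simpa using (congrArg (⇑w⁻¹) (hfg (v⁻¹ a))).symm

lemma containsPattern_p21543_s4 (x₀ x₁ x₂ x₃ x₄ : Fin n)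
    (h₀₁ : x₀ < x₁) (h₁₂ : x₁ < x₂) (h₂₃ : x₂ < x₃) (h₃₄ : x₃ < x₄)
    (hw₁₀ : w x₁ < w x₀) (hw₀₄ : w x₀ < w x₄) (hw₄₃ : w x₄ < w x₃) (hw₃₂ : w x₃ < w x₂) :
    ContainsPattern w p21543 :=
  containsPattern_iff.mpr ⟨![x₀, x₁, x₂, x₃, x₄], ![w x₁, w x₀, w x₄, w x₃, w x₂],
    by simp [*], by simp [*], fun a => by fin_cases a <;> rfl⟩

lemma containsPattern_p214635_s4 (x₀ x₁ x₂ x₃ x₄ x₅ : Fin n)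
    (h₀₁ : x₀ < x₁) (h₁₂ : x₁ < x₂) (h₂₃ : x₂ < x₃) (h₃₄ : x₃ < x₄) (h₄₅ : x₄ < x₅)
    (hw₁₀ : w x₁ < w x₀) (hw₀₄ : w x₀ < w x₄) (hw₄₂ : w x₄ < w x₂) (hw₂₅ : w x₂ < w x₅)
    (hw₅₃ : w x₅ < w x₃) :
    ContainsPattern w p214635 :=
  containsPattern_iff.mpr ⟨![x₀, x₁, x₂, x₃, x₄, x₅], ![w x₁, w x₀, w x₄, w x₂, w x₅, w x₃],
    by simp [*], by simp [*], fun a => by fin_cases a <;> rfl⟩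

lemma containsPattern_p241635 (x₀ x₁ x₂ x₃ x₄ x₅ : Fin n)
    (h₀₁ : x₀ < x₁) (h₁₂ : x₁ < x₂) (h₂₃ : x₂ < x₃) (h₃₄ : x₃ < x₄) (h₄₅ : x₄ < x₅)
    (hw₂₀ : w x₂ < w x₀) (hw₀₄ : w x₀ < w x₄) (hw₄₁ : w x₄ < w x₁) (hw₁₅ : w x₁ < w x₅)
    (hw₅₃ : w x₅ < w x₃) :
    ContainsPattern w p241635 :=
  containsPattern_iff.mpr ⟨![x₀, x₁, x₂, x₃, x₄, x₅], ![w x₂, w x₀, w x₄, w x₁, w x₅, w x₃],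
    by simp [*], by simp [*], fun a => by fin_cases a <;> rfl⟩

end Pattern

lemma p21543_inv : p21543⁻¹ = p21543 :=
  inv_eq_of_mul_eq_one_right (Equiv.ext fun x => by fin_cases x <;> rfl)

lemma p214635_inv : p214635⁻¹ = p215364 :=
  inv_eq_of_mul_eq_one_right (Equiv.ext fun x => by fin_cases x <;> rfl)

lemma p241635_inv : p241635⁻¹ = p315264 :=
  inv_eq_of_mul_eq_one_right (Equiv.ext fun x => by fin_cases x <;> rfl)

section Obstruction

variable {n : ℕ} {w : Equiv.Perm (Fin n)} {r s i j j' : Fin n}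

theorem containsPattern_of_essential_pair_in_row_of_lt
    (hdom : (r, s) ∈ DominantPart w) (hess : (r, s) ∈ EssentialSet w)
    (hj : (i, j) ∈ EssentialSet w) (hj' : (i, j') ∈ EssentialSet w)
    (hjj' : j < j') (hri : r < i) (hsj : s < j)
    (hcol : ∀ k, (k, j) ∈ DominantPart w → (k, j') ∈ DominantPart w) :
    ContainsPattern w p21543 ∨ ContainsPattern w p214635 ∨ ContainsPattern w p241635 := by
  have hD := mem_dominantPart_iff.mp hdom
  obtain ⟨r₁, hr₁, hwr₁⟩ := exists_next_row_of_mem_essentialSet hess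
  obtain ⟨c, hwc, hcr⟩ := exists_next_col_of_mem_essentialSet hess
  obtain ⟨b, hwb, hbi⟩ := exists_next_col_of_mem_essentialSet hj
  obtain ⟨a, hwa, hia⟩ : ∃ a, w a = j ∧ i < a := ⟨w⁻¹ j, by simp, hj.1.2⟩
  obtain ⟨a', hwa', hia'⟩ : ∃ a', w a' = j' ∧ i < a' := ⟨w⁻¹ j', by simp, hj'.1.2⟩
  have hwi : j' < w i := hj'.1.1
  have hca : w c ≠ w a := w.injective.ne (by omega)
  have hba' : w b ≠ w a' := w.injective.ne (by omega)
  have hr₁i : r₁ ≠ i := by rintro rfl; omega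
  have hbi' : b ≠ i := by rintro rfl; omega
  rcases lt_or_gt_of_ne (show a ≠ a' by rintro rfl; omega) with haa' | haa'
  · rcases lt_or_gt_of_ne (show b ≠ r₁ by rintro rfl; omega) with hbr₁ | hbr₁
    · have hbj' : (b, j') ∉ DominantPart w := fun h =>
        (mem_dominantPart_iff.mp h b le_rfl).not_ge (by omega)
      obtain ⟨t, htb, hwt⟩ : ∃ t ≤ b, w t ≤ j := by
        simpa [mem_dominantPart_iff] using mt (hcol b) hbj'
      have hst := hD t (by omega)
      have hta : w t ≠ w a := w.injective.ne (by omega)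
      have htb' : t ≠ b := by rintro rfl; omega
      exact Or.inr (Or.inr (by apply containsPattern_p241635 t b r₁ i a a' <;> omega))
    · exact Or.inr (Or.inl (by apply containsPattern_p214635_s4 c r₁ b i a a' <;> omega))
  · exact Or.inl (by apply containsPattern_p21543_s4 c r₁ i a' a <;> omega)

theorem containsPattern_of_essential_pair_in_row
    (hdom : (r, s) ∈ DominantPart w) (hess : (r, s) ∈ EssentialSet w)
    (hj : (i, j) ∈ EssentialSet w) (hj' : (i, j') ∈ EssentialSet w)
    (hne : j ≠ j') (hri : r < i) (hsj : s < j) (hsj' : s < j')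
    (hmax : (Finset.univ.filter fun k => (k, j) ∈ DominantPart w).max =
      (Finset.univ.filter fun k => (k, j') ∈ DominantPart w).max) :
    ContainsPattern w p21543 ∨ ContainsPattern w p214635 ∨ ContainsPattern w p241635 := by
  rcases hne.lt_or_gt with hlt | hlt
  · exact containsPattern_of_essential_pair_in_row_of_lt hdom hess hj hj' hlt hri hsj
      fun _ => mem_dominantPart_of_max_eq hmax
  · exact containsPattern_of_essential_pair_in_row_of_lt hdom hess hj' hj hlt hri hsj'
      fun _ => mem_dominantPart_of_max_eq hmax.symm

theorem containsPattern_of_essential_pair_in_col {i' : Fin n}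
    (hdom : (r, s) ∈ DominantPart w) (hess : (r, s) ∈ EssentialSet w)
    (hi : (i, j) ∈ EssentialSet w) (hi' : (i', j) ∈ EssentialSet w)
    (hne : i ≠ i') (hri : r < i) (hri' : r < i') (hsj : s < j)
    (hmax : (Finset.univ.filter fun l => (i, l) ∈ DominantPart w).max =
      (Finset.univ.filter fun l => (i', l) ∈ DominantPart w).max) :
    ContainsPattern w p21543 ∨ ContainsPattern w p215364 ∨ ContainsPattern w p315264 := by
  have hmax' : (Finset.univ.filter fun k => (k, i) ∈ DominantPart w⁻¹).max =
      (Finset.univ.filter fun k => (k, i') ∈ DominantPart w⁻¹).max := by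
    simpa only [mem_dominantPart_inv] using hmax
  rcases containsPattern_of_essential_pair_in_row (mem_dominantPart_inv.mpr hdom)
    (mem_essentialSet_inv.mpr hess) (mem_essentialSet_inv.mpr hi) (mem_essentialSet_inv.mpr hi')
    hne hsj hri hri' hmax' with h | h | h
  · exact Or.inl (by simpa only [inv_inv, p21543_inv] using h.inv)
  · exact Or.inr (Or.inl (by simpa only [inv_inv, p214635_inv] using h.inv))
  · exact Or.inr (Or.inr (by simpa only [inv_inv, p241635_inv] using h.inv))

end Obstruction

/-- a Type 2 obstruction forces containment of one of
21543, 214635, 241635, 215364, 315264. -/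
theorem statement4 {n : ℕ} (w : Equiv.Perm (Fin n)) (h : HasType2Obstruction w) :
    ContainsPattern w p21543 ∨ ContainsPattern w p214635 ∨ ContainsPattern w p241635 ∨
      ContainsPattern w p215364 ∨ ContainsPattern w p315264 := by
  obtain ⟨⟨r, s⟩, ⟨hdom, hess⟩, ⟨i, j, j', hj, hj', hne, hri, hsj, hsj', hmax⟩ |
    ⟨i, i', j, hi, hi', hne, hri, hri', hsj, hmax⟩⟩ := h
  · have := containsPattern_of_essential_pair_in_row hdom hess hj hj' hne hri hsj hsj' hmax
    tauto
  · have := containsPattern_of_essential_pair_in_col hdom hess hi hi' hne hri hri' hsj hmax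
    tauto

end CDGPaper
end

section
/- Let w ∈ S_n contain v ∈ S_k via indices i_1 < i_2 < ⋯ < i_k (so that w(i_a) < w(i_b) exactly when v(a) < v(b)), and let c_1 < c_2 < ⋯ < c_k be the values w(i_1), …, w(i_k) listed in increasing order. Then for all a, b ∈ [k], (a,b) ∈ D_v if and only if (i_a, c_b) ∈ D_w; that is, the Rothe diagram of v is obtained from that of w by restricting to the rows i_1, …, i_k and the columns w(i_1), …, w(i_k). -/
open scoped Classical

universe u

namespace CDGPaper
/- The entries of `w` at the positions `f` come in the order prescribed by `v`, so listing them
by increasing value means reading them along `v⁻¹`: the increasing enumeration `c` is forced to be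
`w ∘ f ∘ v⁻¹`. Then the two conditions `b < v a` and `a < v⁻¹ b` for `(a, b) ∈ D_v` become
`c b < w (f a)` and `f a < w⁻¹ (c b)`, via the pattern and the monotonicity of `f`. -/

section PatternOrder

variable {ι β : Type*} [Preorder β] {e : Equiv.Perm ι} {g : ι → β}

theorem strictMono_comp_symm_of_lt_iff [Preorder ι] (he : ∀ a b, e a < e b ↔ g a < g b) :
    StrictMono (g ∘ e.symm) := fun x y hxy => by
  simpa only [Function.comp_apply, ← he, Equiv.apply_symm_apply] using hxy

theorem eq_comp_symm_of_lt_iff [LinearOrder ι] [WellFoundedLT ι] {c : ι → β} (hc : StrictMono c)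
    (he : ∀ a b, e a < e b ↔ g a < g b) (hrange : Set.range c = Set.range g) :
    c = g ∘ e.symm := by
  rw [← hc.range_inj (strictMono_comp_symm_of_lt_iff he), hrange,
    e.symm.surjective.range_comp]

end PatternOrder

theorem mem_rotheDiagram_iff_of_pattern {n k : ℕ} {w : Equiv.Perm (Fin n)}
    {v : Equiv.Perm (Fin k)} {f : Fin k → Fin n} (hf : StrictMono f)
    (hpat : ∀ a b : Fin k, v a < v b ↔ w (f a) < w (f b)) (a b : Fin k) :
    (a, b) ∈ RotheDiagram v ↔ (f a, w (f (v.symm b))) ∈ RotheDiagram w := by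
  simp only [RotheDiagram, Set.mem_ofPred_eq, Equiv.Perm.coe_inv, Equiv.symm_apply_apply]
  refine and_congr ?_ hf.lt_iff_lt.symm
  simpa only [Equiv.apply_symm_apply] using hpat (v.symm b) a

/-- if `w` contains `v` via `i_1 < ⋯ < i_k` and `c` enumerates the values
`w(i_1), …, w(i_k)` in increasing order, then `(a,b) ∈ D_v ↔ (i_a, c_b) ∈ D_w`. -/
theorem statement14 {n k : ℕ} (w : Equiv.Perm (Fin n)) (v : Equiv.Perm (Fin k))
    (f : Fin k → Fin n) (hf : StrictMono f)
    (hpat : ∀ a b : Fin k, v a < v b ↔ w (f a) < w (f b))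
    (c : Fin k → Fin n) (hc : StrictMono c)
    (hrange : Set.range c = Set.range (w ∘ f)) :
    ∀ a b : Fin k, (a, b) ∈ RotheDiagram v ↔ (f a, c b) ∈ RotheDiagram w := by
  obtain rfl : c = w ∘ f ∘ v.symm := eq_comp_symm_of_lt_iff hc hpat hrange
  exact mem_rotheDiagram_iff_of_pattern hf hpat

end CDGPaper
end
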